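/- Let d : Fin 6 → ℕ. If the polynomial 1 − 4t³ − t⁴ + Σ_{i=1}^{6} t^{d_i} − 2t⁷ in ℤ[t] is divisible by (1−t)³, then d_i = 5 for all i. -/

import Mathlib

/-! Divisibility by `(1 - t)³` means that the first and second derivatives vanish at `t = 1`.
Evaluated at `1`, they give `∑ dᵢ = 30` and `∑ dᵢ (dᵢ - 1) = 120`, hence `∑ (dᵢ - 5)² = 0`. -/

open Polynomial Finset

theorem Polynomial.IsRoot.iterate_derivative_of_pow_dvd {R : Type*} [CommSemiring R]
    {p q : R[X]} {a : R} {m n : ℕ} (hq : q.IsRoot a) (hpq : q ^ n ∣ p) (hmn : m < n) :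
    (derivative^[m] p).IsRoot a :=
  hq.dvd <| (dvd_pow_self q (Nat.sub_ne_zero_of_lt hmn)).trans
    (pow_sub_dvd_iterate_derivative_of_pow_dvd m hpq)

theorem Polynomial.eval_one_iterate_derivative_X_pow {R : Type*} [CommSemiring R] (n k : ℕ) :
    (derivative^[k] (X ^ n : R[X])).eval 1 = n.descFactorial k := by
  simp [iterate_derivative_X_pow_eq_natCast_mul]

theorem Finset.eq_of_sum_eq_of_sum_sq_eq {ι R : Type*} [CommRing R] [LinearOrder R]
    [IsStrictOrderedRing R] {s : Finset ι} {x : ι → R} {c : R}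
    (h₁ : ∑ i ∈ s, x i = #s * c) (h₂ : ∑ i ∈ s, x i ^ 2 = #s * c ^ 2) :
    ∀ i ∈ s, x i = c := by
  have hvar : ∑ i ∈ s, (x i - c) ^ 2 = 0 := by
    simp only [sub_sq, sum_add_distrib, sum_sub_distrib, ← sum_mul, ← mul_sum, sum_const, h₁, h₂,
      nsmul_eq_mul]
    ring
  intro i hi
  exact sub_eq_zero.mp <| pow_eq_zero_iff two_ne_zero |>.mp <|
    (sum_eq_zero_iff_of_nonneg fun j _ => sq_nonneg (x j - c)).mp hvar i hi

/-- Let `d : Fin 6 → ℕ`. If the polynomial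
`1 − 4t³ − t⁴ + Σ_{i} t^{d i} − 2t⁷` in `ℤ[t]` is divisible by `(1 − t)³`,
then `d i = 5` for all `i`. -/
theorem degrees_all_five_of_dvd (d : Fin 6 → ℕ)
    (h : ((1 - X) ^ 3 : Polynomial ℤ) ∣
      (1 - 4 * X ^ 3 - X ^ 4 + ∑ i : Fin 6, X ^ (d i) - 2 * X ^ 7)) :
    ∀ i, d i = 5 := by
  have hroot : (1 - X : ℤ[X]).IsRoot 1 := by simp
  have h₁ := hroot.iterate_derivative_of_pow_dvd h (m := 1) (by norm_num)
  have h₂ := hroot.iterate_derivative_of_pow_dvd h (m := 2) (by norm_num)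
  simp only [IsRoot.def, iterate_map_add, iterate_map_sub, iterate_derivative_sum, eval_add,
    eval_sub, eval_finsetSum, eval_one_iterate_derivative_X_pow, Nat.cast_descFactorial_two ℤ,
    mul_sub, mul_one, sum_sub_distrib, ← sq] at h₁ h₂
  norm_num at h₁ h₂
  have hsum : ∑ i, (d i : ℤ) = 30 := by linarith
  have hsq : ∑ i, (d i : ℤ) ^ 2 = 150 := by linarith
  intro i
  have hi := eq_of_sum_eq_of_sum_sq_eq (s := univ) (x := fun i => (d i : ℤ)) (c := 5)
    (by rw [card_fin]; norm_num [hsum]) (by rw [card_fin]; norm_num [hsq]) i (mem_univ i)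
  exact_mod_cast hi
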